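/- A finite rack (X, ◃) is injective (the natural map X → G_{(X,◃)} to its structure group is injective) if and only if (X, ◃) is isomorphic to a subquandle of a conjugation quandle of a finite group, if and only if it is isomorphic to a subquandle of a conjugation quandle of any group. -/

import Mathlib

/-!
The structure group `G` of a rack `X` is universal for maps `f : X → H` with
`f (x ◃ y) = (f y)⁻¹ * f x * f y`, so `X → G` is injective as soon as any such map is.
Conversely `G` acts on `X` by right translations, compatibly with conjugation through `X → G`,
so the kernel of `G → Sym(X)` is central. For finite `X`, `G` is therefore a finitely generated
group whose center has finite index; such a group is residually finite (its center is a finitely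
generated abelian group), and a finite quotient separating the finitely many generators is a
finite group into whose conjugation quandle `X` embeds.
-/

/-- The defining relations of the structure group of a rack:
`x y = y (x ◃ y)` for all `x, y`. -/
def rackRels {X : Type*} (op : X → X → X) : Set (FreeGroup X) :=
  {w | ∃ x y, w = FreeGroup.of x * FreeGroup.of y *
    (FreeGroup.of y * FreeGroup.of (op x y))⁻¹}

/-- The structure group of a rack `(X, ◃)`. -/
abbrev RackGroup {X : Type*} (op : X → X → X) : Type _ :=
  PresentedGroup (rackRels op)

open Function

universe u v

namespace Group.ResiduallyFinite

variable {G : Type u} {G' : Type*} [Group G] [Group G']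

theorem of_injective (f : G →* G') (hf : Injective f) [ResiduallyFinite G'] :
    ResiduallyFinite G := by
  rw [residuallyFinite_iff_forall_finiteIndexNormalSubgroup]
  exact fun g hg => hf <| (map_one f).symm ▸
    eq_one_iff_forall_finiteIndexNormalSubroup (f g) fun H => hg (H.comap f)

instance pi {ι : Type*} {G : ι → Type*} [∀ i, Group (G i)] [∀ i, ResiduallyFinite (G i)] :
    ResiduallyFinite (∀ i, G i) := by
  rw [residuallyFinite_iff_forall_finiteIndexNormalSubgroup]
  intro g hg
  funext i
  exact eq_one_iff_forall_finiteIndexNormalSubroup (g i) fun K =>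
    hg (K.comap (Pi.evalMonoidHom G i))

instance multiplicativeInt : ResiduallyFinite (Multiplicative ℤ) := by
  refine residuallyFinite_of_forall_exists_finite_monoidHom fun g hg => ?_
  set n := g.toAdd
  have hn : n ≠ 0 := hg
  refine ⟨Multiplicative (ZMod (n.natAbs + 1)), inferInstance, inferInstance,
    (Int.castAddHom _).toMultiplicative, fun h => ?_⟩
  have hdvd : n.natAbs + 1 ∣ n.natAbs :=
    Int.natCast_dvd.mp ((ZMod.intCast_zmod_eq_zero_iff_dvd n _).mp h)
  have := Nat.le_of_dvd (Int.natAbs_pos.mpr hn) hdvd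
  omega

instance of_commGroup_fg {A : Type*} [CommGroup A] [FG A] : ResiduallyFinite A := by
  obtain ⟨ι, j, _, _, p, hp, e, ⟨φ⟩⟩ := CommGroup.equiv_free_prod_prod_multiplicative_zmod A
  have (i : ι) : NeZero (p i ^ e i) := ⟨pow_ne_zero _ (hp i).ne_zero⟩
  exact of_injective φ.toMonoidHom φ.injective

theorem of_finiteIndex (H : Subgroup G) [H.FiniteIndex] [ResiduallyFinite H] :
    ResiduallyFinite G := by
  rw [residuallyFinite_iff_exists_finiteIndex]
  intro g hg
  by_cases hgH : g ∈ H
  · obtain ⟨K, hK, hgK⟩ :=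
      (residuallyFinite_iff_exists_finiteIndex (G := H)).mp ‹_› ⟨g, hgH⟩ (by simpa using hg)
    have hKG : (K.map H.subtype).FiniteIndex :=
      ⟨by rw [Subgroup.index_map_subtype]; exact mul_ne_zero hK.index_ne_zero Subgroup.FiniteIndex.index_ne_zero⟩
    refine ⟨K.map H.subtype, hKG, ?_⟩
    rintro ⟨k, hk, rfl⟩
    exact hgK hk
  · exact ⟨H, inferInstance, hgH⟩

open scoped IsMulCommutative in
theorem of_finiteIndex_center [FG G] [(Subgroup.center G).FiniteIndex] : ResiduallyFinite G :=
  of_finiteIndex (Subgroup.center G)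

theorem exists_finite_monoidHom_injective_comp {X : Type v} [Finite X] [ResiduallyFinite G]
    {f : X → G} (hf : Injective f) :
    ∃ (Q : Type max u v) (_ : Group Q) (_ : Finite Q) (ψ : G →* Q), Injective (ψ ∘ f) := by
  have (p : X × X) : ∃ N : FiniteIndexNormalSubgroup G,
      f p.1 ≠ f p.2 → (f p.1 : G ⧸ N.toSubgroup) ≠ f p.2 := by
    by_cases h : f p.1 = f p.2
    · exact ⟨.ofSubgroup ⊤, fun h' => absurd h h'⟩
    · obtain ⟨N, hN⟩ := exists_finiteIndexNormalSubgroup_of_residuallyFinite _ _ h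
      exact ⟨N, fun _ => hN⟩
  choose N hN using this
  refine ⟨∀ p, G ⧸ (N p).toSubgroup, inferInstance, inferInstance,
    MonoidHom.pi fun p => QuotientGroup.mk' (N p).toSubgroup, fun x y hxy => ?_⟩
  by_contra hne
  exact hN (x, y) (hf.ne hne) (congrFun hxy (x, y) :)

end Group.ResiduallyFinite

structure IsRack {X : Type*} (op : X → X → X) : Prop where
  self_distrib : ∀ x y z, op (op x y) z = op (op x z) (op y z)
  bijective : ∀ y, Bijective (fun x => op x y)

/-- `f` is a rack homomorphism from `(X, op)` to the conjugation quandle `(G, ◃_Conj)`. -/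
def IsConjHom {X G : Type*} [Group G] (op : X → X → X) (f : X → G) : Prop :=
  ∀ x y, f (op x y) = (f y)⁻¹ * f x * f y

theorem IsConjHom.comp {X G H F : Type*} [Group G] [Group H] [FunLike F G H]
    [MonoidHomClass F G H] {op : X → X → X} {f : X → G} (hf : IsConjHom op f) (ψ : F) :
    IsConjHom op (ψ ∘ f) := fun x y => by
  simp only [comp_apply, hf x y, map_mul, map_inv]

namespace IsRack

variable {X : Type*} {op : X → X → X} (hX : IsRack op)

noncomputable def rightPerm (y : X) : Equiv.Perm X :=
  Equiv.ofBijective _ (hX.bijective y)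

theorem isConjHom_inv_rightPerm : IsConjHom op fun y => (hX.rightPerm y)⁻¹ := fun x y => by
  have h : hX.rightPerm (op x y) * hX.rightPerm y = hX.rightPerm y * hX.rightPerm x :=
    Equiv.ext fun z => (hX.self_distrib z x y).symm
  beta_reduce
  rw [eq_mul_inv_of_mul_eq h]
  group

end IsRack

namespace RackGroup

variable {X : Type*} {op : X → X → X}

theorem isConjHom_of : IsConjHom op (PresentedGroup.of : X → RackGroup op) := fun x y => by
  have h : PresentedGroup.mk (rackRels op)
      (FreeGroup.of x * FreeGroup.of y * (FreeGroup.of y * FreeGroup.of (op x y))⁻¹) = 1 :=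
    (QuotientGroup.eq_one_iff _).mpr (Subgroup.subset_normalClosure ⟨x, y, rfl⟩)
  rw [map_mul, map_inv, map_mul, mul_inv_eq_one] at h
  change PresentedGroup.of x * PresentedGroup.of y =
    PresentedGroup.of y * PresentedGroup.of (op x y) at h
  rw [mul_assoc, h, inv_mul_cancel_left]

def lift {G : Type*} [Group G] {f : X → G} (hf : IsConjHom op f) : RackGroup op →* G :=
  PresentedGroup.toGroup (f := f) <| by
    rintro r ⟨x, y, rfl⟩
    simp only [map_mul, map_inv, FreeGroup.lift_apply_of, hf x y]
    group

@[simp]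
theorem lift_of {G : Type*} [Group G] {f : X → G} (hf : IsConjHom op f) (x : X) :
    lift hf (PresentedGroup.of x) = f x :=
  PresentedGroup.toGroup.of _

theorem of_injective_of_isConjHom {G : Type*} [Group G] {f : X → G} (hf : IsConjHom op f)
    (hinj : Injective f) : Injective (PresentedGroup.of : X → RackGroup op) :=
  fun x y hxy => hinj <| by rw [← lift_of hf, ← lift_of hf, hxy]

instance [Finite X] : Group.FG (RackGroup op) :=
  Group.fg_iff.mpr ⟨_, PresentedGroup.closure_range_of _, Set.finite_range _⟩

section Action

variable (hX : IsRack op)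

noncomputable def toPerm : RackGroup op →* Equiv.Perm X :=
  lift hX.isConjHom_inv_rightPerm

theorem of_toPerm_apply (g : RackGroup op) (x : X) :
    PresentedGroup.of (toPerm hX g x) = g * PresentedGroup.of x * g⁻¹ := by
  have hg : g ∈ Subgroup.closure (Set.range PresentedGroup.of) := by simp
  induction hg using Subgroup.closure_induction generalizing x with
  | mem _ h =>
    obtain ⟨y, rfl⟩ := h
    have hy : op (toPerm hX (PresentedGroup.of y) x) y = x :=
      (hX.rightPerm y).apply_symm_apply x
    rw [← hy, isConjHom_of, hy]
    group
  | one => simp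
  | mul g h _ _ ihg ihh =>
    rw [map_mul, Equiv.Perm.mul_apply, ihg, ihh]
    group
  | inv g _ ih =>
    have h := ih (toPerm hX g⁻¹ x)
    rw [← Equiv.Perm.mul_apply, ← map_mul, mul_inv_cancel, map_one, Equiv.Perm.one_apply] at h
    rw [h]
    group

theorem ker_toPerm_le_center : (toPerm hX).ker ≤ Subgroup.center (RackGroup op) := by
  intro g hg
  have hcomm : Subgroup.closure (Set.range PresentedGroup.of) ≤ Subgroup.centralizer {g} := by
    rw [Subgroup.closure_le]
    rintro _ ⟨x, rfl⟩
    have h := of_toPerm_apply hX g x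
    rw [MonoidHom.mem_ker.mp hg, Equiv.Perm.one_apply, eq_mul_inv_iff_mul_eq] at h
    exact Subgroup.mem_centralizer_singleton_iff.mpr h
  rw [PresentedGroup.closure_range_of] at hcomm
  exact Subgroup.mem_center_iff.mpr fun h =>
    Subgroup.mem_centralizer_singleton_iff.mp (hcomm trivial)

end Action

theorem finiteIndex_center [Finite X] (hX : IsRack op) :
    (Subgroup.center (RackGroup op)).FiniteIndex :=
  Subgroup.finiteIndex_of_le (ker_toPerm_le_center hX)

theorem residuallyFinite [Finite X] (hX : IsRack op) : Group.ResiduallyFinite (RackGroup op) :=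
  have := finiteIndex_center hX
  .of_finiteIndex_center

theorem exists_finite_isConjHom_injective [Finite X] (hX : IsRack op)
    (hinj : Injective (PresentedGroup.of : X → RackGroup op)) :
    ∃ (H : Type) (_ : Group H) (_ : Finite H) (f : X → H), Injective f ∧ IsConjHom op f := by
  have := residuallyFinite hX
  obtain ⟨Q, _, _, ψ, hψ⟩ := Group.ResiduallyFinite.exists_finite_monoidHom_injective_comp hinj
  exact ⟨Shrink.{0} Q, inferInstance, inferInstance,
    Shrink.mulEquiv.symm ∘ ψ ∘ PresentedGroup.of, Shrink.mulEquiv.symm.injective.comp hψ,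
    (isConjHom_of.comp ψ).comp Shrink.mulEquiv.symm⟩

end RackGroup

/-- A finite rack is injective (the natural map to its structure group is
injective) iff it embeds as a subquandle of the conjugation quandle of a finite
group, iff it embeds as a subquandle of the conjugation quandle of any group. -/
theorem rack_injective_iff_conj_subquandle {X : Type*} [Fintype X] (op : X → X → X)
    (hsd : ∀ x y z, op (op x y) z = op (op x z) (op y z))
    (hbij : ∀ y, Function.Bijective (fun x => op x y)) :
    (Function.Injective (fun x : X => (PresentedGroup.of x : RackGroup op)) ↔
        ∃ (H : Type) (_ : Group H) (_ : Finite H) (f : X → H),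
          Function.Injective f ∧ ∀ x y, f (op x y) = (f y)⁻¹ * f x * f y) ∧
      (Function.Injective (fun x : X => (PresentedGroup.of x : RackGroup op)) ↔
        ∃ (H : Type) (_ : Group H) (f : X → H),
          Function.Injective f ∧ ∀ x y, f (op x y) = (f y)⁻¹ * f x * f y) := by
  have hX : IsRack op := ⟨hsd, hbij⟩
  have to_finite := RackGroup.exists_finite_isConjHom_injective hX
  have of_conj : (∃ (H : Type) (_ : Group H) (f : X → H), Injective f ∧ IsConjHom op f) →
      Injective (PresentedGroup.of : X → RackGroup op) :=
    fun ⟨_, _, _, hinj, hf⟩ => RackGroup.of_injective_of_isConjHom hf hinj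
  refine ⟨⟨to_finite, fun ⟨H, _, _, f, hf⟩ => of_conj ⟨H, _, f, hf⟩⟩, ⟨fun h => ?_, of_conj⟩⟩
  obtain ⟨H, _, _, f, hf⟩ := to_finite h
  exact ⟨H, _, f, hf⟩
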